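/- arXiv:1402.5460 — 2 statements merged into one kernel-verified Lean document; each statement's English description precedes it below -/
import Mathlib

section
/- Let A, B be nonempty closed convex subsets of a finite-dimensional real Hilbert space X with ri A ∩ ri B ≠ ∅, and let T = P_B R_A + Id - P_A be the Douglas–Rachford operator. Then T is boundedly linearly regular: for every ρ > 0 there exists κ > 0 such that ‖x - Tx‖ ≥ κ·d_{Fix T}(x) for all x with ‖x‖ ≤ ρ. -/
/-
Fix e ∈ ri A ∩ ri B and let U, V be the directions of aff A, aff B and Y = U + V. Nearest
points in A and in B do not move when x is translated by a vector of Yᗮ, so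
T (x + v) = T x + v for v ∈ Yᗮ. Hence (A ∩ B) + Yᗮ ⊆ Fix T, and it suffices to bound
d(x, A ∩ B) by ‖x - T x‖ for x in the affine hull e + Y. For such x put p = P_A x and
q = P_B (2p - x), so that x - T x = p - q. Two estimates, uniform on bounded sets, finish:

* ‖x - p‖ ≤ c ‖p - q‖: write w = x - p = u + v with u ∈ U, v ∈ V and ‖u‖, ‖v‖ = O(‖w‖).
  Testing the normal inequality of w at p against e + t u ∈ A, and that of (p - q) - w at q
  against e - t v ∈ B, the two terms t⟪w, u⟫ and t⟪w, v⟫ add up to t ‖w‖².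
* d(p, A ∩ B) ≤ C ‖p - q‖: split q - p = u + v in the same way; the point y = p + u = q - v
  lies in aff A ∩ aff B close to both sets, and moving it slightly towards e lands in A ∩ B.

Finite dimension enters only through the decompositions with controlled norms, i.e. the open
mapping theorem for U × V → U + V.
-/

open Metric
open scoped RealInnerProductSpace

theorem Submodule.exists_bounded_decomposition_of_mem_sup {𝕜 E : Type*}
    [NontriviallyNormedField 𝕜] [CompleteSpace 𝕜] [NormedAddCommGroup E] [NormedSpace 𝕜 E]
    [FiniteDimensional 𝕜 E] (U V : Submodule 𝕜 E) :
    ∃ K > 0, ∀ w ∈ U ⊔ V, ∃ u ∈ U, ∃ v ∈ V, u + v = w ∧ ‖u‖ ≤ K * ‖w‖ ∧ ‖v‖ ≤ K * ‖w‖ := by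
  set f := U.subtype.coprod V.subtype
  have := FiniteDimensional.complete 𝕜 (U × V)
  have := FiniteDimensional.complete 𝕜 (LinearMap.range f)
  have hrange : LinearMap.range f = U ⊔ V := by
    rw [LinearMap.range_coprod, Submodule.range_subtype, Submodule.range_subtype]
  obtain ⟨K, hK, hpre⟩ := (LinearMap.toContinuousLinearMap f.rangeRestrict).exists_preimage_norm_le
    f.surjective_rangeRestrict
  refine ⟨K, hK, fun w hw => ?_⟩
  obtain ⟨⟨u, v⟩, huv, hnorm⟩ := hpre ⟨w, hrange ▸ hw⟩
  refine ⟨u, u.2, v, v.2, congrArg Subtype.val huv, ?_, ?_⟩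
  · exact (norm_fst_le (u, v)).trans hnorm
  · exact (norm_snd_le (u, v)).trans hnorm

section Normed

variable {E : Type*} [NormedAddCommGroup E] [NormedSpace ℝ E]

theorem exists_add_mem_of_mem_intrinsicInterior {A : Set E} {e : E}
    (he : e ∈ intrinsicInterior ℝ A) :
    ∃ ε > 0, ∀ z ∈ vectorSpan ℝ A, ‖z‖ ≤ ε → z + e ∈ A := by
  obtain ⟨y, hy, rfl⟩ := mem_intrinsicInterior.1 he
  obtain ⟨ε, hε, hball⟩ := Metric.mem_nhds_iff.1 (mem_interior_iff_mem_nhds.1 hy)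
  refine ⟨ε / 2, half_pos hε, fun z hz hzε => ?_⟩
  have hmem : z +ᵥ (y : E) ∈ affineSpan ℝ A :=
    AffineSubspace.vadd_mem_of_mem_direction (by rwa [direction_affineSpan]) y.2
  have hzy : (⟨z + y, hmem⟩ : affineSpan ℝ A) ∈ ball y ε := by
    rw [mem_ball, Subtype.dist_eq, dist_eq_norm, add_sub_cancel_right]
    linarith
  exact hball hzy

theorem exists_add_mem_of_mem_intrinsicInterior_inter {A B : Set E} {e : E}
    (he : e ∈ intrinsicInterior ℝ A ∩ intrinsicInterior ℝ B) :
    ∃ ε > 0, (∀ z ∈ vectorSpan ℝ A, ‖z‖ ≤ ε → z + e ∈ A) ∧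
      (∀ z ∈ vectorSpan ℝ B, ‖z‖ ≤ ε → z + e ∈ B) := by
  obtain ⟨εA, hεA, hA⟩ := exists_add_mem_of_mem_intrinsicInterior he.1
  obtain ⟨εB, hεB, hB⟩ := exists_add_mem_of_mem_intrinsicInterior he.2
  exact ⟨min εA εB, lt_min hεA hεB, fun z hz hzε => hA z hz (hzε.trans (min_le_left _ _)),
    fun z hz hzε => hB z hz (hzε.trans (min_le_right _ _))⟩

theorem Convex.lineMap_mem_of_norm_sub_le {A : Set E} (hA : Convex ℝ A) {e : E} {ε : ℝ}
    (hε : 0 < ε) (hball : ∀ z ∈ vectorSpan ℝ A, ‖z‖ ≤ ε → z + e ∈ A) {a y : E} (ha : a ∈ A)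
    (hy : y - a ∈ vectorSpan ℝ A) {s : ℝ} (hs : ‖y - a‖ ≤ s) :
    AffineMap.lineMap y e (s / (s + ε)) ∈ A := by
  obtain rfl | hspos := ((norm_nonneg _).trans hs).eq_or_lt
  · rw [norm_le_zero_iff, sub_eq_zero] at hs
    simpa [hs] using ha
  -- `lineMap y e (s / (s + ε))` is a convex combination of `a` and the point below.
  have hb : (ε / s) • (y - a) + e ∈ A := hball _ (Submodule.smul_mem _ _ hy) (by
    rw [norm_smul, Real.norm_of_nonneg (by positivity), div_mul_eq_mul_div, div_le_iff₀ hspos]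
    exact mul_le_mul_of_nonneg_left hs hε.le)
  have hcoef : s / (s + ε) * (ε / s) = 1 - s / (s + ε) := by field_simp; ring
  have hmem := hA.add_smul_sub_mem ha hb (t := s / (s + ε))
    ⟨by positivity, (div_le_one (by positivity)).2 (by linarith)⟩
  convert hmem using 1
  rw [AffineMap.lineMap_apply_module]
  linear_combination (norm := module) -hcoef • (y - a)

theorem exists_infDist_inter_le_mul_norm_sub [FiniteDimensional ℝ E] {A B : Set E}
    (hA : Convex ℝ A) (hB : Convex ℝ B) {e : E}
    (he : e ∈ intrinsicInterior ℝ A ∩ intrinsicInterior ℝ B) (r : ℝ) :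
    ∃ C, ∀ p ∈ A, ∀ q ∈ B, ‖p - e‖ ≤ r → infDist p (A ∩ B) ≤ C * ‖p - q‖ := by
  obtain ⟨ε, hε, hballA, hballB⟩ := exists_add_mem_of_mem_intrinsicInterior_inter he
  obtain ⟨K, hK, hdec⟩ :=
    Submodule.exists_bounded_decomposition_of_mem_sup (vectorSpan ℝ A) (vectorSpan ℝ B)
  have heA := intrinsicInterior_subset he.1
  have heB := intrinsicInterior_subset he.2
  refine ⟨K * (2 + r / ε), fun p hp q hq hpe => ?_⟩
  have hqp : q - p ∈ vectorSpan ℝ A ⊔ vectorSpan ℝ B := by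
    rw [← sub_sub_sub_cancel_right q p e]
    exact Submodule.sub_mem _ (Submodule.mem_sup_right (vsub_mem_vectorSpan ℝ hq heB))
      (Submodule.mem_sup_left (vsub_mem_vectorSpan ℝ hp heA))
  obtain ⟨u, hu, v, hv, huv, hun, hvn⟩ := hdec _ hqp
  rw [norm_sub_rev] at hun hvn
  set s := K * ‖p - q‖
  set z := AffineMap.lineMap (p + u) e (s / (s + ε))
  have hzA : z ∈ A := hA.lineMap_mem_of_norm_sub_le hε hballA hp (by simpa) (by simpa)
  have hzB : z ∈ B := by
    have hyq : p + u - q = -v := by rw [eq_sub_of_add_eq huv]; abel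
    exact hB.lineMap_mem_of_norm_sub_le hε hballB hq (by simpa [hyq]) (by simpa [hyq])
  have hs : 0 ≤ s := by positivity
  have hr : 0 ≤ r := (norm_nonneg _).trans hpe
  have hye : dist (p + u) e ≤ r + s := by
    rw [dist_eq_norm, add_sub_right_comm]
    exact (norm_add_le _ _).trans (add_le_add hpe hun)
  have hfrac : (r + s) / (s + ε) ≤ (ε + r) / ε := by
    rw [div_le_div_iff₀ (by positivity) hε]
    nlinarith
  calc infDist p (A ∩ B) ≤ dist p z := infDist_le_dist_of_mem ⟨hzA, hzB⟩
    _ ≤ dist p (p + u) + dist z (p + u) := dist_triangle_right _ _ _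
    _ ≤ s + s / (s + ε) * (r + s) := by
        rw [dist_lineMap_left, Real.norm_of_nonneg (by positivity), dist_eq_norm,
          sub_add_cancel_left, norm_neg]
        gcongr
    _ = s + s * ((r + s) / (s + ε)) := by ring
    _ ≤ s + s * ((ε + r) / ε) := by gcongr
    _ = K * (2 + r / ε) * ‖p - q‖ := by field_simp; ring

end Normed

def IsNearestPoint {E : Type*} [NormedAddCommGroup E] (A : Set E) (x p : E) : Prop :=
  p ∈ A ∧ ‖x - p‖ = infDist x A

namespace IsNearestPoint

variable {E : Type*} [NormedAddCommGroup E] {A : Set E} {x p a : E}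

theorem norm_sub_le (h : IsNearestPoint A x p) (ha : a ∈ A) : ‖x - p‖ ≤ ‖x - a‖ := by
  rw [h.2, ← dist_eq_norm]
  exact infDist_le_dist_of_mem ha

theorem norm_sub_le_two_mul (h : IsNearestPoint A x p) (ha : a ∈ A) : ‖p - a‖ ≤ 2 * ‖x - a‖ :=
  calc ‖p - a‖ = ‖(x - a) - (x - p)‖ := by rw [sub_sub_sub_cancel_left]
    _ ≤ ‖x - a‖ + ‖x - p‖ := _root_.norm_sub_le _ _
    _ ≤ 2 * ‖x - a‖ := by linarith [h.norm_sub_le ha]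

theorem eq_of_mem (h : IsNearestPoint A x p) (hx : x ∈ A) : p = x := by
  have := h.2
  rw [infDist_zero_of_mem hx, norm_eq_zero, sub_eq_zero] at this
  exact this.symm

end IsNearestPoint

section InnerProduct

variable {X : Type*} [NormedAddCommGroup X] [InnerProductSpace ℝ X]

section Convex

variable {A : Set X} {x p q : X}

theorem isNearestPoint_iff_inner_le (hA : Convex ℝ A) (hp : p ∈ A) :
    IsNearestPoint A x p ↔ ∀ a ∈ A, ⟪x - p, a - p⟫ ≤ 0 := by
  rw [← norm_eq_iInf_iff_real_inner_le_zero hA hp, IsNearestPoint, infDist_eq_iInf]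
  simp only [hp, true_and, dist_eq_norm]

theorem IsNearestPoint.inner_le (hA : Convex ℝ A) (h : IsNearestPoint A x p) :
    ∀ a ∈ A, ⟪x - p, a - p⟫ ≤ 0 :=
  (isNearestPoint_iff_inner_le hA h.1).1 h

theorem IsNearestPoint.unique (hA : Convex ℝ A) (hp : IsNearestPoint A x p)
    (hq : IsNearestPoint A x q) : p = q := by
  have hsum : ⟪x - p, q - p⟫ + ⟪x - q, p - q⟫ = ‖q - p‖ ^ 2 := by
    rw [← real_inner_self_eq_norm_sq, ← neg_sub q p, inner_neg_right, ← sub_eq_add_neg,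
      ← inner_sub_left, sub_sub_sub_cancel_left]
  have : ‖q - p‖ ^ 2 ≤ 0 := hsum ▸ add_nonpos (hp.inner_le hA q hq.1) (hq.inner_le hA p hp.1)
  exact (sub_eq_zero.1 (norm_eq_zero.1 (pow_eq_zero_iff two_ne_zero |>.1
    (le_antisymm this (sq_nonneg _))))).symm

theorem IsNearestPoint.add_of_mem_orthogonal (hA : Convex ℝ A) (h : IsNearestPoint A x p)
    {v : X} (hv : v ∈ (vectorSpan ℝ A)ᗮ) : IsNearestPoint A (x + v) p := by
  have hp := h.1
  rw [isNearestPoint_iff_inner_le hA hp] at h ⊢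
  intro a ha
  have hap : a - p ∈ vectorSpan ℝ A := vsub_mem_vectorSpan ℝ ha hp
  rw [add_sub_right_comm, inner_add_left, Submodule.inner_left_of_mem_orthogonal hap hv, add_zero]
  exact h a ha

end Convex

theorem mul_norm_le_of_inner_nonpos {A B : Set X} {e p q w u v : X} {ε K : ℝ} (hε : 0 < ε)
    (hK : 0 < K) (hballA : ∀ z ∈ vectorSpan ℝ A, ‖z‖ ≤ ε → z + e ∈ A)
    (hballB : ∀ z ∈ vectorSpan ℝ B, ‖z‖ ≤ ε → z + e ∈ B)
    (hwA : ∀ a ∈ A, ⟪w, a - p⟫ ≤ 0) (hwB : ∀ b ∈ B, ⟪p - q - w, b - q⟫ ≤ 0)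
    (hu : u ∈ vectorSpan ℝ A) (hv : v ∈ vectorSpan ℝ B) (huv : u + v = w)
    (hun : ‖u‖ ≤ K * ‖w‖) (hvn : ‖v‖ ≤ K * ‖w‖) :
    ε * ‖w‖ ≤ K * ‖p - q‖ * (‖w‖ + ‖e - q‖ + ε) := by
  obtain rfl | hw := eq_or_ne w 0
  · rw [norm_zero, mul_zero]
    positivity
  have hKw : 0 < K * ‖w‖ := by positivity
  set t := ε / (K * ‖w‖)
  have hsmall : ∀ z : X, ‖z‖ ≤ K * ‖w‖ → ‖t • z‖ ≤ ε := fun z hz => by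
    rw [norm_smul, Real.norm_of_nonneg (by positivity), div_mul_eq_mul_div, div_le_iff₀ hKw]
    exact mul_le_mul_of_nonneg_left hz hε.le
  have h1 := hwA _ (hballA _ (Submodule.smul_mem _ t hu) (hsmall u hun))
  have h2 := hwB _ (hballB _ (Submodule.neg_mem _ (Submodule.smul_mem _ t hv))
    (by rw [norm_neg]; exact hsmall v hvn))
  have hsum : t * ‖w‖ ^ 2 ≤ ⟪w, p - q⟫ + ⟪p - q, t • v - (e - q)⟫ := by
    rw [← real_inner_self_eq_norm_sq]
    nth_rewrite 2 [← huv]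
    simp only [inner_add_right, inner_sub_left, inner_sub_right, inner_neg_right,
      real_inner_smul_right] at h1 h2 ⊢
    linarith
  have hCS : ⟪w, p - q⟫ + ⟪p - q, t • v - (e - q)⟫ ≤ ‖p - q‖ * (‖w‖ + ‖e - q‖ + ε) := by
    have h3 := real_inner_le_norm w (p - q)
    have h4 := real_inner_le_norm (p - q) (t • v - (e - q))
    have h5 : ‖t • v - (e - q)‖ ≤ ‖e - q‖ + ε := by
      linarith [norm_sub_le (t • v) (e - q), hsmall v hvn]
    nlinarith [norm_nonneg (p - q)]
  have ht : t * ‖w‖ ^ 2 = ε * ‖w‖ / K := by simp only [t]; field_simp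
  rw [ht, div_le_iff₀ hK] at hsum
  linarith [mul_le_mul_of_nonneg_right hCS hK.le]

theorem exists_norm_sub_le_mul_norm_sub_of_isNearestPoint [FiniteDimensional ℝ X] {A B : Set X}
    (hA : Convex ℝ A) (hB : Convex ℝ B) {e : X}
    (he : e ∈ intrinsicInterior ℝ A ∩ intrinsicInterior ℝ B) (r : ℝ) :
    ∃ c, ∀ x p q, x - e ∈ vectorSpan ℝ A ⊔ vectorSpan ℝ B → ‖x - e‖ ≤ r →
      IsNearestPoint A x p → IsNearestPoint B ((2 : ℝ) • p - x) q → ‖x - p‖ ≤ c * ‖p - q‖ := by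
  obtain ⟨ε, hε, hballA, hballB⟩ := exists_add_mem_of_mem_intrinsicInterior_inter he
  obtain ⟨K, hK, hdec⟩ :=
    Submodule.exists_bounded_decomposition_of_mem_sup (vectorSpan ℝ A) (vectorSpan ℝ B)
  have heA := intrinsicInterior_subset he.1
  have heB := intrinsicInterior_subset he.2
  refine ⟨K * (7 * r + ε) / ε, fun x p q hx hxe hp hq => ?_⟩
  have hw : x - p ∈ vectorSpan ℝ A ⊔ vectorSpan ℝ B := by
    rw [← sub_sub_sub_cancel_right x p e]
    exact Submodule.sub_mem _ hx (Submodule.mem_sup_left (vsub_mem_vectorSpan ℝ hp.1 heA))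
  obtain ⟨u, hu, v, hv, huv, hun, hvn⟩ := hdec _ hw
  have hwB : ∀ b ∈ B, ⟪p - q - (x - p), b - q⟫ ≤ 0 := by
    have hreflect : (2 : ℝ) • p - x - q = p - q - (x - p) := by module
    simpa only [hreflect] using hq.inner_le hB
  have key := mul_norm_le_of_inner_nonpos hε hK hballA hballB (hp.inner_le hA) hwB hu hv huv hun hvn
  have hxp : ‖x - p‖ ≤ r := (hp.norm_sub_le heA).trans hxe
  have hqe : ‖e - q‖ ≤ 6 * r := by
    have hreflect : (2 : ℝ) • p - x - e = (x - e) - (2 : ℝ) • (x - p) := by module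
    calc ‖e - q‖ ≤ 2 * ‖(2 : ℝ) • p - x - e‖ :=
          (norm_sub_rev e q).trans_le (hq.norm_sub_le_two_mul heB)
      _ ≤ 2 * (‖x - e‖ + 2 * ‖x - p‖) := by
          rw [hreflect]
          gcongr
          exact (norm_sub_le _ _).trans_eq (by rw [norm_smul, Real.norm_two])
      _ ≤ 6 * r := by linarith
  rw [div_mul_eq_mul_div, le_div_iff₀ hε]
  have hδ : 0 ≤ K * ‖p - q‖ := by positivity
  nlinarith [mul_le_mul_of_nonneg_left (show ‖x - p‖ + ‖e - q‖ + ε ≤ 7 * r + ε by linarith) hδ]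

def douglasRachford (PA PB : X → X) (x : X) : X :=
  PB ((2 : ℝ) • PA x - x) + x - PA x

section DouglasRachford

variable {A B : Set X} {PA PB : X → X}

theorem douglasRachford_add_of_mem_orthogonal (hA : Convex ℝ A) (hB : Convex ℝ B)
    (hPA : ∀ x, IsNearestPoint A x (PA x)) (hPB : ∀ x, IsNearestPoint B x (PB x)) {x v : X}
    (hv : v ∈ (vectorSpan ℝ A ⊔ vectorSpan ℝ B)ᗮ) :
    douglasRachford PA PB (x + v) = douglasRachford PA PB x + v := by
  rw [← Submodule.inf_orthogonal] at hv
  have hPAv : PA (x + v) = PA x :=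
    (hPA (x + v)).unique hA ((hPA x).add_of_mem_orthogonal hA hv.1)
  have hPBv : PB ((2 : ℝ) • PA x - x + -v) = PB ((2 : ℝ) • PA x - x) :=
    (hPB _).unique hB ((hPB _).add_of_mem_orthogonal hB (Submodule.neg_mem _ hv.2))
  rw [douglasRachford, douglasRachford, hPAv, ← hPBv]
  abel_nf

theorem douglasRachford_eq_self_of_mem_inter (hPA : ∀ x, IsNearestPoint A x (PA x))
    (hPB : ∀ x, IsNearestPoint B x (PB x)) {c : X} (hc : c ∈ A ∩ B) :
    douglasRachford PA PB c = c := by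
  rw [douglasRachford, (hPA c).eq_of_mem hc.1, two_smul, add_sub_cancel_right,
    add_sub_cancel_right, (hPB c).eq_of_mem hc.2]

theorem infDist_fixedPoints_douglasRachford_le (hA : Convex ℝ A) (hB : Convex ℝ B)
    (hPA : ∀ x, IsNearestPoint A x (PA x)) (hPB : ∀ x, IsNearestPoint B x (PB x))
    (hAB : (A ∩ B).Nonempty) {x v : X} (hv : v ∈ (vectorSpan ℝ A ⊔ vectorSpan ℝ B)ᗮ) :
    infDist (x + v) (Function.fixedPoints (douglasRachford PA PB)) ≤ infDist x (A ∩ B) := by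
  refine (le_infDist hAB).2 fun c hc => ?_
  have hfix : c + v ∈ Function.fixedPoints (douglasRachford PA PB) := by
    rw [Function.mem_fixedPoints, Function.IsFixedPt,
      douglasRachford_add_of_mem_orthogonal hA hB hPA hPB hv,
      douglasRachford_eq_self_of_mem_inter hPA hPB hc]
  exact (infDist_le_dist_of_mem hfix).trans_eq (dist_add_right x c v)

theorem exists_infDist_inter_le_mul_norm_sub_douglasRachford [FiniteDimensional ℝ X]
    (hA : Convex ℝ A) (hB : Convex ℝ B) (hPA : ∀ x, IsNearestPoint A x (PA x))
    (hPB : ∀ x, IsNearestPoint B x (PB x)) {e : X}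
    (he : e ∈ intrinsicInterior ℝ A ∩ intrinsicInterior ℝ B) (r : ℝ) :
    ∃ κ, ∀ x, x - e ∈ vectorSpan ℝ A ⊔ vectorSpan ℝ B → ‖x - e‖ ≤ r →
      infDist x (A ∩ B) ≤ κ * ‖x - douglasRachford PA PB x‖ := by
  obtain ⟨c, hc⟩ := exists_norm_sub_le_mul_norm_sub_of_isNearestPoint hA hB he r
  obtain ⟨C, hC⟩ := exists_infDist_inter_le_mul_norm_sub hA hB he (2 * r)
  refine ⟨c + C, fun x hx hxe => ?_⟩
  set p := PA x
  set q := PB ((2 : ℝ) • p - x)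
  have hres : x - douglasRachford PA PB x = p - q := by rw [douglasRachford]; abel
  have hpe : ‖p - e‖ ≤ 2 * r :=
    ((hPA x).norm_sub_le_two_mul (intrinsicInterior_subset he.1)).trans (by linarith)
  calc infDist x (A ∩ B) ≤ infDist p (A ∩ B) + dist x p := infDist_le_infDist_add_dist
    _ ≤ C * ‖p - q‖ + c * ‖p - q‖ := by
        rw [dist_eq_norm]
        exact add_le_add (hC p (hPA x).1 q (hPB _).1 hpe) (hc x p q hx hxe (hPA x) (hPB _))
    _ = (c + C) * ‖x - douglasRachford PA PB x‖ := by rw [hres]; ring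

end DouglasRachford

end InnerProduct

theorem dr_transversal_boundedly_linearly_regular_general
    {X : Type*} [NormedAddCommGroup X] [InnerProductSpace ℝ X] [FiniteDimensional ℝ X]
    (A B : Set X)
    (hAconv : Convex ℝ A) (hBconv : Convex ℝ B)
    (htrans : (intrinsicInterior ℝ A ∩ intrinsicInterior ℝ B).Nonempty)
    (PA PB : X → X)
    (hPA : ∀ x, PA x ∈ A ∧ ‖x - PA x‖ = infDist x A)
    (hPB : ∀ x, PB x ∈ B ∧ ‖x - PB x‖ = infDist x B)
    (RA : X → X) (hRA : ∀ x, RA x = (2:ℝ) • PA x - x)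
    (T : X → X) (hT : ∀ x, T x = PB (RA x) + x - PA x) :
    ∀ ρ > (0:ℝ), ∃ κ > (0:ℝ), ∀ x : X, ‖x‖ ≤ ρ →
      ‖x - T x‖ ≥ κ * infDist x {y | T y = y} := by
  intro ρ _
  obtain ⟨e, he⟩ := htrans
  obtain rfl : T = douglasRachford PA PB := funext fun x => by rw [hT, hRA]; rfl
  set Y := vectorSpan ℝ A ⊔ vectorSpan ℝ B
  obtain ⟨κ, hκ⟩ :=
    exists_infDist_inter_le_mul_norm_sub_douglasRachford hAconv hBconv hPA hPB he (ρ + ‖e‖)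
  refine ⟨(max κ 1)⁻¹, by positivity, fun x hx => ?_⟩
  obtain ⟨u, hu, hv, hue⟩ : ∃ u, u - e ∈ Y ∧ x - u ∈ Yᗮ ∧ ‖u - e‖ ≤ ‖x - e‖ :=
    ⟨Y.starProjection (x - e) + e, by simpa using Y.starProjection_apply_mem (x - e),
      by simpa [sub_add_eq_sub_sub, sub_right_comm] using
        Y.sub_starProjection_mem_orthogonal (x - e),
      by simpa using Y.norm_starProjection_apply_le (x - e)⟩
  have hres : x - douglasRachford PA PB x = u - douglasRachford PA PB u := by
    conv_lhs =>
      rw [← add_sub_cancel u x, douglasRachford_add_of_mem_orthogonal hAconv hBconv hPA hPB hv]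
    abel
  rw [ge_iff_le, inv_mul_le_iff₀ (by positivity), hres]
  calc infDist x (Function.fixedPoints (douglasRachford PA PB)) ≤ infDist u (A ∩ B) := by
        simpa only [add_sub_cancel] using
          infDist_fixedPoints_douglasRachford_le hAconv hBconv hPA hPB
            ⟨e, intrinsicInterior_subset he.1, intrinsicInterior_subset he.2⟩ (x := u) hv
    _ ≤ κ * ‖u - douglasRachford PA PB u‖ :=
        hκ u hu (hue.trans ((norm_sub_le _ _).trans (by linarith)))
    _ ≤ max κ 1 * ‖u - douglasRachford PA PB u‖ := by gcongr; exact le_max_left _ _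

/-- The Douglas–Rachford operator of two transversal convex sets is boundedly
linearly regular. -/
theorem dr_transversal_boundedly_linearly_regular
    {X : Type*} [NormedAddCommGroup X] [InnerProductSpace ℝ X] [FiniteDimensional ℝ X]
    (A B : Set X) (hAne : A.Nonempty) (hBne : B.Nonempty)
    (hAc : IsClosed A) (hBc : IsClosed B) (hAconv : Convex ℝ A) (hBconv : Convex ℝ B)
    (htrans : (intrinsicInterior ℝ A ∩ intrinsicInterior ℝ B).Nonempty)
    (PA PB : X → X)
    (hPA : ∀ x, PA x ∈ A ∧ ‖x - PA x‖ = infDist x A)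
    (hPB : ∀ x, PB x ∈ B ∧ ‖x - PB x‖ = infDist x B)
    (RA : X → X) (hRA : ∀ x, RA x = (2:ℝ) • PA x - x)
    (T : X → X) (hT : ∀ x, T x = PB (RA x) + x - PA x) :
    ∀ ρ > (0:ℝ), ∃ κ > (0:ℝ), ∀ x : X, ‖x‖ ≤ ρ →
      ‖x - T x‖ ≥ κ * infDist x {y | T y = y} :=
  dr_transversal_boundedly_linearly_regular_general A B hAconv hBconv htrans PA PB hPA hPB RA hRA T
    hT
end

section
/- Suppose each T_i (i in a finite index set I) is boundedly linearly regular and averaged nonexpansive on a real Hilbert space X, with fixed point sets Z_i and Z = ∩_i Z_i ≠ ∅, and (Z_i)_{i∈I} is boundedly linearly regular. Let weights ω_{i,n} ∈ [0,1] with Σ_i ω_{i,n} = 1, I_n = {i : ω_{i,n} > 0}, inf_n inf_{i∈I_n} ω_{i,n} > 0, and suppose there is p ≥ 1 with I_n ∪ ⋯ ∪ I_{n+p-1} = I for all n. Then the quasi-cyclic iteration x_{n+1} = Σ_i ω_{i,n} T_i x_n converges linearly to some point in Z. -/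
open Metric Filter

/-!
An averaged operator `T = (1 - t) • id + t • N` satisfies
`‖T y - z‖² + (1 - t) ‖y - T y‖² ≤ ‖y - z‖²` at every fixed point `z`. By convexity of `‖·‖²`
the iterates are therefore Fejér monotone with respect to `Z`, and over a block of `p` steps the
squared distance to each `z ∈ Z` drops by `c S`, where `c = minᵢ (1 - tᵢ)` and `S` is the sum of
the weighted residuals `ωᵢ ‖x - Tᵢ x‖²` over the block. Every index is active in the block with
weight at least `ε`, so regularity of the operators and of the family bounds `d(xₙ, Z)²` by `L² S`;
hence `d(xₙ₊ₚ, Z) ≤ β d(xₙ, Z)` with `β² = L² / (c + L²) < 1`. A Fejér monotone sequence whose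
distance to a closed set decays geometrically makes geometrically small steps, so it converges
linearly to a point of that set.
-/

section PseudoMetric

variable {α : Type*} [PseudoMetricSpace α]

def IsFejerMonotone (S : Set α) (x : ℕ → α) : Prop :=
  ∀ z ∈ S, ∀ n, dist (x (n + 1)) z ≤ dist (x n) z

namespace IsFejerMonotone

variable {S : Set α} {x : ℕ → α}

lemma dist_le_of_le (hx : IsFejerMonotone S x) {z : α} (hz : z ∈ S) {m n : ℕ} (hmn : m ≤ n) :
    dist (x n) z ≤ dist (x m) z :=
  antitone_nat_of_succ_le (f := fun n ↦ dist (x n) z) (hx z hz) hmn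

lemma antitone_infDist (hx : IsFejerMonotone S x) (hS : S.Nonempty) :
    Antitone fun n ↦ infDist (x n) S :=
  antitone_nat_of_succ_le fun n ↦ (le_infDist hS).2 fun _ hz ↦
    (infDist_le_dist_of_mem hz).trans (hx _ hz n)

lemma dist_le_two_mul_infDist (hx : IsFejerMonotone S x) (hS : S.Nonempty) {m n : ℕ}
    (hmn : m ≤ n) : dist (x n) (x m) ≤ 2 * infDist (x m) S := by
  have : dist (x n) (x m) / 2 ≤ infDist (x m) S := (le_infDist hS).2 fun z hz ↦ by
    linarith [hx.dist_le_of_le hz hmn, dist_triangle_right (x n) (x m) z]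
  linarith

end IsFejerMonotone

lemma Antitone.le_mul_geometric_of_le_mul_add {d : ℕ → ℝ} (hd : Antitone d) (hd0 : 0 ≤ d 0)
    {p : ℕ} (hp : p ≠ 0) {β : ℝ} (hβ0 : 0 < β) (hβ1 : β ≤ 1) (h : ∀ n, d (n + p) ≤ β * d n)
    (n : ℕ) : d n ≤ d 0 / β * (β ^ (p⁻¹ : ℝ)) ^ n := by
  set r := β ^ (p⁻¹ : ℝ)
  have hrp : r ^ p = β := Real.rpow_inv_natCast_pow hβ0.le hp
  have hr0 : 0 ≤ r := by positivity
  have hr1 : r ≤ 1 := Real.rpow_le_one hβ0.le hβ1 (by positivity)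
  have hblock : ∀ k, d (p * k) ≤ β ^ k * d 0 := by
    intro k
    induction k with
    | zero => simp
    | succ k ih =>
      calc d (p * (k + 1)) = d (p * k + p) := by rw [mul_add_one]
        _ ≤ β * (β ^ k * d 0) := (h _).trans (by gcongr)
        _ = β ^ (k + 1) * d 0 := by ring
  obtain ⟨k, j, hj, rfl⟩ : ∃ k j, j < p ∧ n = p * k + j :=
    ⟨n / p, n % p, Nat.mod_lt _ (Nat.pos_of_ne_zero hp), (Nat.div_add_mod n p).symm⟩
  calc d (p * k + j) ≤ β ^ k * d 0 := (hd (Nat.le_add_right _ _)).trans (hblock k)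
    _ = d 0 / β * r ^ (p * k + p) := by
      rw [pow_add, pow_mul, hrp]; field_simp
    _ ≤ d 0 / β * r ^ (p * k + j) := by
      gcongr d 0 / β * ?_
      exact pow_le_pow_of_le_one hr0 hr1 (by omega)

theorem IsFejerMonotone.exists_dist_le_geometric [CompleteSpace α] {S : Set α} {x : ℕ → α}
    (hx : IsFejerMonotone S x) (hS : IsClosed S) (hne : S.Nonempty) {p : ℕ} (hp : p ≠ 0)
    {β : ℝ} (hβ0 : 0 < β) (hβ1 : β < 1) (h : ∀ n, infDist (x (n + p)) S ≤ β * infDist (x n) S) :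
    ∃ z ∈ S, ∃ M ≥ (0 : ℝ), ∃ r ∈ Set.Ico (0 : ℝ) 1, ∀ n, dist (x n) z ≤ M * r ^ n := by
  set r := β ^ (p⁻¹ : ℝ)
  set C := infDist (x 0) S / β
  have hr0 : 0 ≤ r := by positivity
  have hr1 : r < 1 := Real.rpow_lt_one hβ0.le hβ1 (by positivity)
  have hC : 0 ≤ C := div_nonneg infDist_nonneg hβ0.le
  have hd : ∀ n, infDist (x n) S ≤ C * r ^ n :=
    (hx.antitone_infDist hne).le_mul_geometric_of_le_mul_add infDist_nonneg hp hβ0 hβ1.le h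
  have hstep : ∀ n, dist (x n) (x (n + 1)) ≤ 2 * C * r ^ n := fun n ↦ by
    rw [dist_comm]; linarith [hx.dist_le_two_mul_infDist hne n.le_succ, hd n]
  obtain ⟨z, hz⟩ := cauchySeq_tendsto_of_complete (cauchySeq_of_le_geometric r _ hr1 hstep)
  have hxz : ∀ n, dist (x n) z ≤ 2 * C / (1 - r) * r ^ n := fun n ↦ by
    rw [div_mul_eq_mul_div]; exact dist_le_of_le_geometric_of_tendsto r _ hr1 hstep hz n
  have hzS : infDist z S ≤ 0 := by
    have hlim := (tendsto_pow_atTop_nhds_zero_of_lt_one hr0 hr1).const_mul (C + 2 * C / (1 - r))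
    rw [mul_zero] at hlim
    refine ge_of_tendsto' hlim fun n ↦ ?_
    linarith [infDist_le_infDist_add_dist (x := z) (y := x n) (s := S), hd n, hxz n,
      dist_comm z (x n)]
  refine ⟨z, (hS.mem_iff_infDist_zero hne).2 (hzS.antisymm infDist_nonneg), 2 * C / (1 - r),
    div_nonneg (by positivity) (by linarith), r, ⟨hr0, hr1⟩, hxz⟩

lemma infDist_le_sqrt_mul_infDist {S : Set α} (hS : S.Nonempty) {x y : α} {c K s : ℝ}
    (hc : 0 < c) (hK : 0 < K) (hs : infDist x S ^ 2 ≤ K * s)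
    (h : ∀ z ∈ S, dist y z ^ 2 + c * s ≤ dist x z ^ 2) :
    infDist y S ≤ √(K / (c + K)) * infDist x S := by
  have hdecr : infDist y S ^ 2 + c * s ≤ infDist x S ^ 2 := by
    rw [← Real.sqrt_le_left infDist_nonneg]
    refine (le_infDist hS).2 fun z hz ↦ (Real.sqrt_le_left dist_nonneg).2 ?_
    nlinarith [h z hz, infDist_le_dist_of_mem (x := y) hz, infDist_nonneg (x := y) (s := S)]
  have hs0 : 0 ≤ s := nonneg_of_mul_nonneg_right ((sq_nonneg _).trans hs) hK
  rw [← pow_le_pow_iff_left₀ infDist_nonneg (mul_nonneg (Real.sqrt_nonneg _) infDist_nonneg)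
    two_ne_zero, mul_pow, Real.sq_sqrt (by positivity), div_mul_eq_mul_div,
    le_div_iff₀ (by positivity)]
  nlinarith [mul_nonneg hc.le hs0]

end PseudoMetric

section Normed

variable {E : Type*} [SeminormedAddCommGroup E]

def IsStronglyQuasiNonexpansive (c : ℝ) (T : E → E) (F : Set E) : Prop :=
  ∀ y, ∀ z ∈ F, ‖T y - z‖ ^ 2 + c * ‖y - T y‖ ^ 2 ≤ ‖y - z‖ ^ 2

lemma IsStronglyQuasiNonexpansive.mono {c c' : ℝ} {T : E → E} {F : Set E}
    (hT : IsStronglyQuasiNonexpansive c T F) (hc : c' ≤ c) :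
    IsStronglyQuasiNonexpansive c' T F := fun y z hz ↦
  (add_le_add_right (mul_le_mul_of_nonneg_right hc (sq_nonneg _)) _).trans (hT y z hz)

variable [NormedSpace ℝ E]

lemma sq_norm_sum_smul_le {ι : Type*} [Fintype ι] {w : ι → ℝ} (hw0 : ∀ i, 0 ≤ w i)
    (hw1 : ∑ i, w i = 1) (v : ι → E) : ‖∑ i, w i • v i‖ ^ 2 ≤ ∑ i, w i * ‖v i‖ ^ 2 := by
  simpa using (convexOn_univ_norm.pow (fun v _ ↦ norm_nonneg v) 2).map_sum_le
    (fun i _ ↦ hw0 i) hw1 (fun i _ ↦ Set.mem_univ (v i))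

lemma continuous_of_averaged {T N : E → E} {t : ℝ} (hN : ∀ x y, ‖N x - N y‖ ≤ ‖x - y‖)
    (hT : ∀ x, T x = (1 - t) • x + t • N x) : Continuous T := by
  have hNc : Continuous N :=
    (LipschitzWith.of_dist_le_mul (K := 1) fun a b ↦ by
      simpa [dist_eq_norm] using hN a b).continuous
  rw [funext hT]
  fun_prop

end Normed

section Hilbert

variable {X : Type*} [NormedAddCommGroup X] [InnerProductSpace ℝ X]

lemma norm_one_sub_smul_add_smul_sq (a b : X) (t : ℝ) :
    ‖(1 - t) • a + t • b‖ ^ 2 = (1 - t) * ‖a‖ ^ 2 + t * ‖b‖ ^ 2 - t * (1 - t) * ‖a - b‖ ^ 2 := by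
  simp only [← real_inner_self_eq_norm_sq, inner_add_left, inner_add_right, inner_sub_left,
    inner_sub_right, real_inner_smul_left, real_inner_smul_right, real_inner_comm a b]
  ring

lemma isStronglyQuasiNonexpansive_of_averaged {T N : X → X} {t : ℝ} (ht : t ∈ Set.Ico (0 : ℝ) 1)
    (hN : ∀ x y, ‖N x - N y‖ ≤ ‖x - y‖) (hT : ∀ x, T x = (1 - t) • x + t • N x) :
    IsStronglyQuasiNonexpansive (1 - t) T {x | T x = x} := by
  intro y z (hz : T z = z)
  have hfix : t * ‖N y - z‖ ^ 2 ≤ t * ‖y - z‖ ^ 2 := by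
    have : t • (N z - z) = 0 := by
      rw [← sub_eq_zero.2 hz, hT z]; module
    rcases smul_eq_zero.1 this with h0 | hNz
    · simp [h0]
    · have h := hN y z
      rw [sub_eq_zero.1 hNz] at h
      gcongr
      exact ht.1
  have hTy : T y - z = (1 - t) • (y - z) + t • (N y - z) := by rw [hT y]; module
  have hyTy : y - T y = t • (y - N y) := by rw [hT y]; module
  rw [hTy, hyTy, norm_one_sub_smul_add_smul_sq, norm_smul, Real.norm_eq_abs, mul_pow, sq_abs,
    sub_sub_sub_cancel_right]
  nlinarith [mul_nonneg (mul_nonneg ht.1 (sq_nonneg (1 - t))) (sq_nonneg ‖y - N y‖)]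

end Hilbert

section WeightedIteration

variable {E : Type*} [SeminormedAddCommGroup E] [NormedSpace ℝ E] {ι : Type*} [Fintype ι]

structure IsWeightedIteration (T : ι → E → E) (ω : ι → ℕ → ℝ) (x : ℕ → E) : Prop where
  weight_nonneg : ∀ i n, 0 ≤ ω i n
  sum_weight : ∀ n, ∑ i, ω i n = 1
  succ_eq : ∀ n, x (n + 1) = ∑ i, ω i n • T i (x n)

def weightedResidual (T : ι → E → E) (ω : ι → ℕ → ℝ) (x : ℕ → E) (n : ℕ) : ℝ :=
  ∑ i, ω i n * ‖x n - T i (x n)‖ ^ 2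

def blockResidual (T : ι → E → E) (ω : ι → ℕ → ℝ) (x : ℕ → E) (p n : ℕ) : ℝ :=
  ∑ j ∈ Finset.range p, weightedResidual T ω x (n + j)

namespace IsWeightedIteration

variable {T : ι → E → E} {ω : ι → ℕ → ℝ} {x : ℕ → E}

lemma succ_sub (hx : IsWeightedIteration T ω x) (n : ℕ) (y : E) :
    x (n + 1) - y = ∑ i, ω i n • (T i (x n) - y) := by
  simp only [hx.succ_eq, smul_sub, Finset.sum_sub_distrib, ← Finset.sum_smul, hx.sum_weight,
    one_smul]

lemma mul_sq_norm_sub_le_weightedResidual (hx : IsWeightedIteration T ω x) (i : ι) (n : ℕ) :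
    ω i n * ‖x n - T i (x n)‖ ^ 2 ≤ weightedResidual T ω x n :=
  Finset.single_le_sum (f := fun i ↦ ω i n * ‖x n - T i (x n)‖ ^ 2)
    (fun i _ ↦ mul_nonneg (hx.weight_nonneg i n) (sq_nonneg _)) (Finset.mem_univ i)

lemma weightedResidual_nonneg (hx : IsWeightedIteration T ω x) (n : ℕ) :
    0 ≤ weightedResidual T ω x n :=
  Finset.sum_nonneg fun i _ ↦ mul_nonneg (hx.weight_nonneg i n) (sq_nonneg _)

lemma blockResidual_nonneg (hx : IsWeightedIteration T ω x) (p n : ℕ) :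
    0 ≤ blockResidual T ω x p n :=
  Finset.sum_nonneg fun j _ ↦ hx.weightedResidual_nonneg (n + j)

lemma weightedResidual_le_blockResidual (hx : IsWeightedIteration T ω x) {j p : ℕ} (hj : j < p)
    (n : ℕ) : weightedResidual T ω x (n + j) ≤ blockResidual T ω x p n :=
  Finset.single_le_sum (f := fun j ↦ weightedResidual T ω x (n + j))
    (fun j _ ↦ hx.weightedResidual_nonneg (n + j)) (Finset.mem_range.2 hj)

lemma sq_norm_succ_sub_le (hx : IsWeightedIteration T ω x) (n : ℕ) :
    ‖x (n + 1) - x n‖ ^ 2 ≤ weightedResidual T ω x n := by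
  rw [hx.succ_sub]
  refine (sq_norm_sum_smul_le (hx.weight_nonneg · n) (hx.sum_weight n) _).trans_eq ?_
  simp only [weightedResidual, norm_sub_rev]

lemma sq_norm_succ_sub_add_le (hx : IsWeightedIteration T ω x) {F : ι → Set E} {c : ℝ}
    (hT : ∀ i, IsStronglyQuasiNonexpansive c (T i) (F i)) {z : E} (hz : z ∈ ⋂ i, F i) (n : ℕ) :
    ‖x (n + 1) - z‖ ^ 2 + c * weightedResidual T ω x n ≤ ‖x n - z‖ ^ 2 := by
  have hzi := Set.mem_iInter.1 hz
  calc ‖x (n + 1) - z‖ ^ 2 + c * weightedResidual T ω x n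
      ≤ ∑ i, ω i n * ‖T i (x n) - z‖ ^ 2 + c * weightedResidual T ω x n := by
        rw [hx.succ_sub]
        gcongr
        exact sq_norm_sum_smul_le (hx.weight_nonneg · n) (hx.sum_weight n) _
    _ = ∑ i, ω i n * (‖T i (x n) - z‖ ^ 2 + c * ‖x n - T i (x n)‖ ^ 2) := by
        simp only [weightedResidual, Finset.mul_sum, mul_add, Finset.sum_add_distrib, mul_left_comm]
    _ ≤ ∑ i, ω i n * ‖x n - z‖ ^ 2 := Finset.sum_le_sum fun i _ ↦
        mul_le_mul_of_nonneg_left (hT i _ z (hzi i)) (hx.weight_nonneg i n)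
    _ = ‖x n - z‖ ^ 2 := by rw [← Finset.sum_mul, hx.sum_weight, one_mul]

lemma isFejerMonotone (hx : IsWeightedIteration T ω x) {F : ι → Set E} {c : ℝ}
    (hT : ∀ i, IsStronglyQuasiNonexpansive c (T i) (F i)) (hc : 0 ≤ c) :
    IsFejerMonotone (⋂ i, F i) x := fun z hz n ↦ by
  rw [dist_eq_norm, dist_eq_norm, ← pow_le_pow_iff_left₀ (norm_nonneg _) (norm_nonneg _)
    two_ne_zero]
  nlinarith [hx.sq_norm_succ_sub_add_le hT hz n, hx.weightedResidual_nonneg n]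

lemma mul_blockResidual_le (hx : IsWeightedIteration T ω x) {F : ι → Set E} {c : ℝ}
    (hT : ∀ i, IsStronglyQuasiNonexpansive c (T i) (F i)) {z : E} (hz : z ∈ ⋂ i, F i)
    (p n : ℕ) : c * blockResidual T ω x p n ≤ ‖x n - z‖ ^ 2 - ‖x (n + p) - z‖ ^ 2 := by
  induction p with
  | zero => simp [blockResidual]
  | succ p ih =>
    rw [blockResidual] at ih ⊢
    rw [Finset.sum_range_succ, mul_add, ← add_assoc n p 1]
    linarith [hx.sq_norm_succ_sub_add_le hT hz (n + p), ih]

lemma norm_sub_le_mul_sqrt_blockResidual (hx : IsWeightedIteration T ω x) {k p : ℕ} (hk : k ≤ p)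
    (n : ℕ) : ‖x n - x (n + k)‖ ≤ p * √(blockResidual T ω x p n) := by
  rw [← dist_eq_norm]
  calc dist (x n) (x (n + k)) ≤ ∑ j ∈ Finset.range k, dist (x (n + j)) (x (n + (j + 1))) := by
        simpa using dist_le_range_sum_dist (fun j ↦ x (n + j)) k
    _ ≤ ∑ _j ∈ Finset.range k, √(blockResidual T ω x p n) := Finset.sum_le_sum fun j hj ↦ by
        rw [dist_comm, dist_eq_norm, ← add_assoc]
        exact Real.le_sqrt_of_sq_le ((hx.sq_norm_succ_sub_le _).trans
          (hx.weightedResidual_le_blockResidual ((Finset.mem_range.1 hj).trans_le hk) n))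
    _ ≤ p * √(blockResidual T ω x p n) := by
        rw [Finset.sum_const, Finset.card_range, nsmul_eq_mul]
        gcongr

lemma infDist_le_mul_sqrt_blockResidual (hx : IsWeightedIteration T ω x) {F : Set E} {i : ι}
    {ε κ : ℝ} {k p n : ℕ} (hk : k < p) (hε : 0 < ε) (hωε : ε ≤ ω i (n + k)) (hκ0 : 0 ≤ κ)
    (hκ : infDist (x (n + k)) F ≤ κ * ‖x (n + k) - T i (x (n + k))‖) :
    infDist (x n) F ≤ (κ / √ε + p) * √(blockResidual T ω x p n) := by
  set B := blockResidual T ω x p n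
  have hres : ‖x (n + k) - T i (x (n + k))‖ ≤ √B / √ε := by
    rw [← Real.sqrt_div' _ hε.le]
    refine Real.le_sqrt_of_sq_le ?_
    rw [le_div_iff₀ hε, mul_comm]
    calc ε * ‖x (n + k) - T i (x (n + k))‖ ^ 2
        ≤ ω i (n + k) * ‖x (n + k) - T i (x (n + k))‖ ^ 2 := by gcongr
      _ ≤ B := (hx.mul_sq_norm_sub_le_weightedResidual i (n + k)).trans
          (hx.weightedResidual_le_blockResidual hk n)
  calc infDist (x n) F ≤ infDist (x (n + k)) F + dist (x n) (x (n + k)) :=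
        infDist_le_infDist_add_dist
    _ ≤ κ * (√B / √ε) + p * √B := by
        rw [dist_eq_norm]
        gcongr
        exacts [hκ.trans (by gcongr), hx.norm_sub_le_mul_sqrt_blockResidual hk.le n]
    _ = (κ / √ε + p) * √B := by ring

theorem exists_lt_one_infDist_add_le_mul [Nonempty ι] (hx : IsWeightedIteration T ω x)
    {F : ι → Set E} {c ε κ μ : ℝ} {p : ℕ} (hT : ∀ i, IsStronglyQuasiNonexpansive c (T i) (F i))
    (hc : 0 < c) (hne : (⋂ i, F i).Nonempty) (hp : 0 < p) (hε : 0 < ε)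
    (hωε : ∀ i n, 0 < ω i n → ε ≤ ω i n) (hcover : ∀ n i, ∃ k < p, 0 < ω i (n + k))
    (hκ0 : 0 ≤ κ) (hκ : ∀ i m, infDist (x m) (F i) ≤ κ * ‖x m - T i (x m)‖) (hμ : 0 < μ)
    (hμF : ∀ m, infDist (x m) (⋂ i, F i) ≤ μ * ⨆ i, infDist (x m) (F i)) :
    ∃ β, 0 < β ∧ β < 1 ∧
      ∀ n, infDist (x (n + p)) (⋂ i, F i) ≤ β * infDist (x n) (⋂ i, F i) := by
  set L := μ * (κ / √ε + p)
  have hL : 0 < L := mul_pos hμ (by have : (0 : ℝ) < p := Nat.cast_pos.2 hp; positivity)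
  refine ⟨√(L ^ 2 / (c + L ^ 2)), by positivity, ?_, fun n ↦ ?_⟩
  · rw [Real.sqrt_lt' one_pos, one_pow, div_lt_one (by positivity)]
    linarith
  set B := blockResidual T ω x p n
  have hdist : infDist (x n) (⋂ i, F i) ≤ L * √B := by
    refine (hμF n).trans ?_
    rw [mul_assoc]
    gcongr
    refine ciSup_le fun i ↦ ?_
    obtain ⟨k, hk, hωk⟩ := hcover n i
    exact hx.infDist_le_mul_sqrt_blockResidual hk hε (hωε i _ hωk) hκ0 (hκ i _)
  refine infDist_le_sqrt_mul_infDist (s := B) hne hc (pow_pos hL 2) ?_ fun z hz ↦ ?_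
  · calc infDist (x n) (⋂ i, F i) ^ 2 ≤ (L * √B) ^ 2 := pow_le_pow_left₀ infDist_nonneg hdist 2
      _ = L ^ 2 * B := by rw [mul_pow, Real.sq_sqrt (hx.blockResidual_nonneg p n)]
  · rw [dist_eq_norm, dist_eq_norm]
    linarith [hx.mul_blockResidual_le hT hz p n]

end IsWeightedIteration

end WeightedIteration

/-- Linear convergence of the quasi-cyclic algorithm. -/
theorem quasicyclic_algorithm_linear_convergence
    {X : Type*} [NormedAddCommGroup X] [InnerProductSpace ℝ X] [CompleteSpace X]
    {ι : Type*} [Fintype ι] [Nonempty ι]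
    (T : ι → X → X)
    (havg : ∀ i, ∃ (lam : ℝ) (N : X → X), lam ∈ Set.Ico (0:ℝ) 1 ∧
      (∀ x y, ‖N x - N y‖ ≤ ‖x - y‖) ∧ ∀ x, T i x = (1 - lam) • x + lam • N x)
    (Z : ι → Set X) (hZ : ∀ i, Z i = {x | T i x = x})
    (hblrop : ∀ i, ∀ ρ > (0:ℝ), ∃ κ ≥ (0:ℝ), ∀ x : X, ‖x‖ ≤ ρ →
      infDist x (Z i) ≤ κ * ‖x - T i x‖)
    (hZne : (⋂ i, Z i).Nonempty)
    (hblrfam : ∀ ρ > (0:ℝ), ∃ μ > (0:ℝ), ∀ x : X, ‖x‖ ≤ ρ →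
      infDist x (⋂ i, Z i) ≤ μ * ⨆ i, infDist x (Z i))
    (ω : ι → ℕ → ℝ) (hω : ∀ i n, ω i n ∈ Set.Icc (0:ℝ) 1)
    (hsum : ∀ n, ∑ i, ω i n = 1)
    (hωpos : ∃ ε > (0:ℝ), ∀ i n, 0 < ω i n → ε ≤ ω i n)
    (p : ℕ) (hp : 1 ≤ p)
    (hcover : ∀ n : ℕ, ∀ i : ι, ∃ k < p, 0 < ω i (n + k))
    (x : ℕ → X) (hx : ∀ n : ℕ, x (n + 1) = ∑ i, ω i n • T i (x n)) :
    ∃ z ∈ ⋂ i, Z i, ∃ M ≥ (0:ℝ), ∃ α ∈ Set.Ico (0:ℝ) 1,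
      ∀ n : ℕ, ‖x n - z‖ ≤ M * α ^ n := by
  choose t N ht hN hT using havg
  have hiter : IsWeightedIteration T ω x := ⟨fun i n ↦ (hω i n).1, hsum, hx⟩
  obtain ⟨i₀, hi₀⟩ := Finite.exists_max t
  have hc : 0 < 1 - t i₀ := sub_pos.2 (ht i₀).2
  have hsqne : ∀ i, IsStronglyQuasiNonexpansive (1 - t i₀) (T i) (Z i) := fun i ↦
    hZ i ▸ (isStronglyQuasiNonexpansive_of_averaged (ht i) (hN i) (hT i)).mono
      (sub_le_sub_left (hi₀ i) 1)
  have hfejer := hiter.isFejerMonotone hsqne hc.le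
  obtain ⟨z₀, hz₀⟩ := hZne
  set ρ := ‖z₀‖ + ‖x 0 - z₀‖ + 1
  have hbdd : ∀ n, ‖x n‖ ≤ ρ := fun n ↦ by
    have := hfejer.dist_le_of_le hz₀ n.zero_le
    rw [dist_eq_norm, dist_eq_norm] at this
    linarith [norm_le_norm_add_norm_sub' (x n) z₀]
  choose κ hκ0 hκ using fun i ↦ hblrop i ρ (by positivity)
  obtain ⟨i₁, hi₁⟩ := Finite.exists_max κ
  obtain ⟨μ, hμ, hμZ⟩ := hblrfam ρ (by positivity)
  obtain ⟨ε, hε, hωε⟩ := hωpos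
  obtain ⟨β, hβ0, hβ1, hcontr⟩ := hiter.exists_lt_one_infDist_add_le_mul hsqne hc ⟨z₀, hz₀⟩ hp
    hε hωε hcover (hκ0 i₁) (fun i m ↦ (hκ i _ (hbdd m)).trans (by gcongr; exact hi₁ i)) hμ
    (fun m ↦ hμZ _ (hbdd m))
  have hclosed : IsClosed (⋂ i, Z i) := isClosed_iInter fun i ↦
    hZ i ▸ isClosed_eq (continuous_of_averaged (hN i) (hT i)) continuous_id
  obtain ⟨z, hz, M, hM, α, hα, hconv⟩ :=
    hfejer.exists_dist_le_geometric hclosed ⟨z₀, hz₀⟩ (by omega) hβ0 hβ1 hcontr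
  exact ⟨z, hz, M, hM, α, hα, fun n ↦ dist_eq_norm (x n) z ▸ hconv n⟩
end
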